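/- arXiv:2212.07735 — 7 statements merged into one kernel-verified Lean document; each statement's English description precedes it below -/
import Mathlib

section
/- Optimality theorem: for every higher-order game (Xt, R, q, φt) and every strategy σ over Xt that is optimal for the game, the outcome along the strategic path of σ equals the optimal outcome of the game, i.e. q(spath(σ)) = K-sequence(φt)(q). -/
/-- Dependent type trees: the empty tree and `X :: Xf` for a type `X` and a forest `Xf`. -/
inductive GTree : Type 1 where
  | nil : GTree
  | cons : (X : Type) → (X → GTree) → GTree

/-- Paths in a dependent type tree. -/
def GTree.Path : GTree → Type
  | .nil => PUnit
  | .cons X Xf => (x : X) × (Xf x).Path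

/-- `S`-structured trees over a type tree. -/
def GTree.Str (S : Type → Type) : GTree → Type
  | .nil => PUnit
  | .cons X Xf => S X × ((x : X) → (Xf x).Str S)

/-- Quantifiers with outcome type `R`. -/
def K (R X : Type) : Type := (X → R) → R

/-- Binary dependent product of quantifiers. -/
def prodK {R X : Type} {Y : X → Type} (φ : K R X) (γ : (x : X) → K R (Y x)) :
    K R ((x : X) × Y x) :=
  fun q => φ (fun x => γ x (fun y => q ⟨x, y⟩))

/-- Iterated product of a quantifier tree. -/
def Ksequence {R : Type} : (t : GTree) → t.Str (K R) → K R t.Path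
  | .nil, _ => fun q => q ⟨⟩
  | .cons _ Xf, φt => prodK φt.1 (fun x => Ksequence (Xf x) (φt.2 x))

/-- Strategies over a type tree. -/
def GTree.Strategy (t : GTree) : Type := t.Str (fun X => X)

/-- The strategic path of a strategy. -/
def spath : (t : GTree) → t.Strategy → t.Path
  | .nil, _ => ⟨⟩
  | .cons _ Xf, σ => ⟨σ.1, spath (Xf σ.1) (σ.2 σ.1)⟩

/-- Optimality of a strategy for the game `(t, R, q, φt)`. -/
def Optimal {R : Type} : (t : GTree) → (t.Path → R) → t.Str (K R) → t.Strategy → Prop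
  | .nil, _, _, _ => True
  | .cons _ Xf, q, φt, σ =>
      (q ⟨σ.1, spath (Xf σ.1) (σ.2 σ.1)⟩ = φt.1 (fun x => q ⟨x, spath (Xf x) (σ.2 x)⟩)) ∧
      ∀ x, Optimal (Xf x) (fun y => q ⟨x, y⟩) (φt.2 x) (σ.2 x)

/-- Optimality theorem: the outcome along the strategic path of an optimal strategy
is the optimal outcome of the game. -/
theorem optimality_theorem {R : Type} (t : GTree) (q : t.Path → R)
    (φt : t.Str (K R)) (σ : t.Strategy) (h : Optimal t q φt σ) :
    q (spath t σ) = Ksequence t φt q := by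
  induction t with
  | nil => rfl
  | cons X Xf ih =>
    obtain ⟨h1, h2⟩ := h
    calc q (spath (.cons X Xf) σ) = q ⟨σ.1, spath (Xf σ.1) (σ.2 σ.1)⟩ := rfl
    _ = φt.1 (fun x => q ⟨x, spath (Xf x) (σ.2 x)⟩) := h1
    _ = φt.1 (fun x => Ksequence (Xf x) (φt.2 x) (fun y => q ⟨x, y⟩)) := by
        apply congrArg; funext x; exact ih x (fun y => q ⟨x, y⟩) (φt.2 x) (σ.2 x) (h2 x)
    _ = Ksequence (.cons X Xf) φt q := rfl
end

section
/- Main lemma: for every type tree Xt, every selection function tree εt : 𝒥 Xt and every outcome function q : Path Xt → R, the strategic path of the strategy induced by εt and q equals the path selected by the J-sequence of εt, i.e. spath(strategy(εt, q)) = J-sequence(εt)(q). -/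
/-- Selection functions with outcome type `R`. -/
def J (R X : Type) : Type := (X → R) → X

/-- Binary dependent product of selection functions. -/
def prodJ {R X : Type} {Y : X → Type} (ε : J R X) (δ : (x : X) → J R (Y x)) :
    J R ((x : X) × Y x) :=
  fun q =>
    let ν : (x : X) → Y x := fun x => δ x (fun y => q ⟨x, y⟩)
    let x₀ : X := ε (fun x => q ⟨x, ν x⟩)
    ⟨x₀, ν x₀⟩

/-- Iterated product of a selection function tree. -/
def Jsequence {R : Type} : (t : GTree) → t.Str (J R) → J R t.Path
  | .nil, _ => fun _ => ⟨⟩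
  | .cons _ Xf, εt => prodJ εt.1 (fun x => Jsequence (Xf x) (εt.2 x))

/-- The strategy induced by a selection function tree and an outcome function. -/
def strategyOf {R : Type} : (t : GTree) → t.Str (J R) → (t.Path → R) → t.Strategy
  | .nil, _, _ => ⟨⟩
  | .cons X Xf, εt, q =>
      ⟨(Jsequence (.cons X Xf) εt q).1,
       fun x => strategyOf (Xf x) (εt.2 x) (fun y => q ⟨x, y⟩)⟩

/-- Main lemma: the strategic path of the induced strategy is the path selected by
the J-sequence. -/
theorem main_lemma {R : Type} (t : GTree) (εt : t.Str (J R)) (q : t.Path → R) :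
    spath t (strategyOf t εt q) = Jsequence t εt q := by
  induction t with
  | nil => rfl
  | cons X Xf ih =>
      show (⟨_, _⟩ : (x : X) × (Xf x).Path) = ⟨_, _⟩
      simp only [spath, strategyOf]
      exact congrArg _ (ih _ _ _)
end

section
/- If a selection function ε : J X attains a quantifier φ : K X, and for every x : X the selection function δ(x) : J (Y x) attains the quantifier γ(x) : K (Y x), then the dependent product ε ⊗J δ : J((x : X) × Y x) attains the dependent product φ ⊗K γ : K((x : X) × Y x). -/
/-- A selection function attains a quantifier. -/
def Attains {R X : Type} (ε : J R X) (φ : K R X) : Prop :=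
  ∀ p : X → R, p (ε p) = φ p

/-- If `ε` attains `φ` and each `δ x` attains `γ x`, then the product `ε ⊗J δ`
attains the product `φ ⊗K γ`. -/
theorem prodJ_attains_prodK {R X : Type} {Y : X → Type}
    (ε : J R X) (φ : K R X) (δ : (x : X) → J R (Y x)) (γ : (x : X) → K R (Y x))
    (hε : Attains ε φ) (hδ : ∀ x, Attains (δ x) (γ x)) :
    Attains (prodJ ε δ) (prodK φ γ) := by
  intro q
  unfold prodJ prodK
  simp only
  have h1 : ∀ x, q ⟨x, δ x fun y => q ⟨x, y⟩⟩ = γ x (fun y => q ⟨x, y⟩) := fun x => by exact hδ x (fun y => q ⟨x, y⟩)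
  have h2 : (fun x => q ⟨x, δ x fun y => q ⟨x, y⟩⟩) = (fun x => γ x fun y => q ⟨x, y⟩) :=
    funext h1
  rw [h1, h2]
  exact hε (fun x => γ x fun y => q ⟨x, y⟩)
end

section
/- For every type tree Xt and every selection function tree εt : 𝒥 Xt, the selection function J-sequence(εt) attains the quantifier K-sequence(ε̄t); that is, for every q : Path Xt → R one has q(J-sequence(εt)(q)) = K-sequence(ε̄t)(q). -/
/-- The quantifier attained by a selection function. -/
def bar {R X : Type} (ε : J R X) : K R X := fun p => p (ε p)

/-- The quantifier tree induced by a selection function tree. -/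
def barTree {R : Type} : (t : GTree) → t.Str (J R) → t.Str (K R)
  | .nil, _ => ⟨⟩
  | .cons _ Xf, εt => ⟨bar εt.1, fun x => barTree (Xf x) (εt.2 x)⟩

/-- The J-sequence of a selection function tree attains the K-sequence of the
induced quantifier tree. -/
theorem Jsequence_attains_Ksequence_barTree {R : Type} (t : GTree)
    (εt : t.Str (J R)) (q : t.Path → R) :
    q (Jsequence t εt q) = Ksequence t (barTree t εt) q := by
  induction t with
  | nil => rfl
  | cons X Xf ih =>
    simp only [Jsequence, Ksequence, barTree, prodJ, prodK, bar]
    have h : (fun x => q ⟨x, Jsequence (Xf x) (εt.2 x) fun y => q ⟨x, y⟩⟩)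
        = fun x => Ksequence (Xf x) (barTree (Xf x) (εt.2 x)) fun y => q ⟨x, y⟩ :=
      funext fun x => ih x (εt.2 x) (fun y => q ⟨x, y⟩)
    rw [← h]
    exact ih _ _ (fun y => q ⟨_, y⟩)
end

section
/- There exists an idempotent map prune : Tree → Tree (so prune(prune(Xt)) = prune(Xt) for every type tree Xt) such that: (i) for every type tree Xt there is a bijection between Path(Xt) and Path(prune(Xt)); and (ii) if Path(Xt) is inhabited, then every internal node of prune(Xt) is inhabited. -/
/-- Every internal node of the tree is inhabited. -/
def GTree.InhNodes : GTree → Prop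
  | .nil => True
  | .cons X Xf => Nonempty X ∧ ∀ x, (Xf x).InhNodes

/-!
Prune bottom-up, and at a node `X :: Xf` restrict `X` to the branches `x` whose subtree `Xf x`
has a path; this changes no path. If every branch already has a path, `X` is kept as it is:
restricting to a subtype would change the node's type again on the next pass, breaking
idempotence. A tree with a path then has only inhabited nodes, since a node survives
pruning only through a branch that carries a path.
-/

namespace GTree

open Classical in
noncomputable def prune : GTree → GTree
  | .nil => .nil
  | .cons X Xf =>
    if ∀ x, Nonempty (Xf x).Path then .cons X fun x => (Xf x).prune
    else .cons {x // Nonempty (Xf x).Path} fun x => (Xf x.1).prune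

noncomputable def pathEquivPrune : (t : GTree) → t.Path ≃ t.prune.Path
  | .nil => Equiv.refl _
  | .cons X Xf => by
    rw [prune]
    split
    · exact Equiv.sigmaCongrRight fun x => (Xf x).pathEquivPrune
    · exact (Equiv.sigmaSubtypeEquivOfSubset (fun x => (Xf x).Path) _ fun _ q => ⟨q⟩).symm.trans
        (Equiv.sigmaCongrRight fun x => (Xf x.1).pathEquivPrune)

theorem nonempty_path_prune_iff (t : GTree) : Nonempty t.prune.Path ↔ Nonempty t.Path :=
  t.pathEquivPrune.nonempty_congr.symm

theorem prune_prune : (t : GTree) → t.prune.prune = t.prune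
  | .nil => rfl
  | .cons X Xf => by
    rw [prune]
    split
    case isTrue hXf =>
      rw [prune, if_pos fun x => (nonempty_path_prune_iff _).mpr (hXf x)]
      exact congrArg _ (funext fun x => (Xf x).prune_prune)
    case isFalse =>
      rw [prune, if_pos fun x => (nonempty_path_prune_iff _).mpr x.2]
      exact congrArg _ (funext fun x => (Xf x.1).prune_prune)

theorem inhNodes_prune : (t : GTree) → Nonempty t.Path → t.prune.InhNodes
  | .nil, _ => trivial
  | .cons X Xf, ⟨x, q⟩ => by
    rw [prune]
    split
    case isTrue hXf => exact ⟨⟨x⟩, fun x => (Xf x).inhNodes_prune (hXf x)⟩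
    case isFalse => exact ⟨⟨⟨x, ⟨q⟩⟩⟩, fun x => (Xf x.1).inhNodes_prune x.2⟩

end GTree

/-- There is an idempotent pruning map on type trees which preserves paths up to
bijection and, as soon as the tree has a path, yields a tree all of whose
internal nodes are inhabited. -/
theorem exists_prune :
    ∃ prune : GTree → GTree,
      (∀ t : GTree, prune (prune t) = prune t) ∧
      (∀ t : GTree, Nonempty (t.Path ≃ (prune t).Path)) ∧
      (∀ t : GTree, Nonempty t.Path → (prune t).InhNodes) :=
  ⟨GTree.prune, GTree.prune_prune, fun t => ⟨t.pathEquivPrune⟩, GTree.inhNodes_prune⟩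
end

section
/- There are maps f from the type trees in Tree all of whose internal nodes are inhabited to Aczel trees in TreeA, and g in the other direction from Aczel trees all of whose nodes are decidable to type trees all of whose internal nodes are inhabited, such that both composites g ∘ f and f ∘ g are levelwise equivalent to the identity (i.e. the round trips yield trees related to the original by the inductively defined relation stating that root node types are in bijection and corresponding subtrees are again so related). Moreover f preserves paths: for every type tree Xt all of whose internal nodes are inhabited, Path(Xt) is in bijection with PathA(f(Xt)). -/
/-- Aczel trees: a single constructor `sup`. -/
inductive TreeA : Type 1 where
  | sup : (X : Type) → (X → TreeA) → TreeA

/-- Paths in an Aczel tree. -/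
def TreeA.PathA : TreeA → Type
  | .sup X Xf => PLift (IsEmpty X) ⊕ ((x : X) × (Xf x).PathA)

/-- Every node of the Aczel tree is decidable (empty or inhabited). -/
def TreeA.DecNodes : TreeA → Prop
  | .sup X Xf => (IsEmpty X ∨ Nonempty X) ∧ ∀ x, (Xf x).DecNodes

/-- Levelwise equivalence of type trees: root node types are in bijection and
corresponding subtrees are again levelwise equivalent. -/
def GTree.Eqv : GTree → GTree → Prop
  | .nil, .nil => True
  | .nil, .cons _ _ => False
  | .cons _ _, .nil => False
  | .cons X Xf, .cons Y Yf => ∃ e : X ≃ Y, ∀ x, (Xf x).Eqv (Yf (e x))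

/-- Levelwise equivalence of Aczel trees. -/
def TreeA.Eqv : TreeA → TreeA → Prop
  | .sup X Xf, .sup Y Yf => ∃ e : X ≃ Y, ∀ x, (Xf x).Eqv (Yf (e x))

noncomputable section

def fAux : GTree → TreeA
  | .nil => .sup Empty Empty.elim
  | .cons X Xf => .sup X (fun x => fAux (Xf x))

open Classical in
def gAux : TreeA → GTree
  | .sup X Xf => if Nonempty X then .cons X (fun x => gAux (Xf x)) else .nil
  termination_by structural a => a

lemma fAux_dec : ∀ t : GTree, (fAux t).DecNodes := by
  intro t
  induction t with
  | nil => exact ⟨Or.inl ⟨Empty.elim⟩, fun x => x.elim⟩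
  | cons X Xf ih => exact ⟨Classical.em (Nonempty X) |>.symm.imp not_nonempty_iff.mp id, ih⟩

lemma gAux_inh : ∀ a : TreeA, (gAux a).InhNodes := by
  intro a
  induction a with
  | sup X Xf ih =>
    unfold gAux
    split
    · exact ⟨‹_›, fun x => ih x⟩
    · trivial

lemma gf_eqv : ∀ (t : GTree), t.InhNodes → (gAux (fAux t)).Eqv t := by
  intro t
  induction t with
  | nil =>
    intro _
    show (gAux (.sup Empty Empty.elim)).Eqv .nil
    unfold gAux
    rw [if_neg (not_nonempty_iff.mpr inferInstance)]
    trivial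
  | cons X Xf ih =>
    intro ⟨hX, hf⟩
    show (gAux (.sup X _)).Eqv _
    unfold gAux
    rw [if_pos hX]
    exact ⟨Equiv.refl X, fun x => ih x (hf x)⟩

lemma fg_eqv : ∀ (a : TreeA), (fAux (gAux a)).Eqv a := by
  intro a
  induction a with
  | sup X Xf ih =>
    show (fAux (gAux (.sup X Xf))).Eqv _
    unfold gAux
    split
    · exact ⟨Equiv.refl X, fun x => ih x⟩
    · haveI : IsEmpty X := not_nonempty_iff.mp ‹_›
      exact ⟨Equiv.equivOfIsEmpty Empty X, fun x => x.elim⟩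

lemma path_equiv : ∀ (t : GTree), t.InhNodes → Nonempty (t.Path ≃ (fAux t).PathA) := by
  intro t
  induction t with
  | nil =>
    intro _
    refine ⟨⟨fun _ => Sum.inl ⟨inferInstance⟩, fun _ => ⟨⟩, fun _ => rfl, ?_⟩⟩
    rintro (⟨a⟩ | ⟨x, _⟩)
    · rfl
    · exact x.elim
  | cons X Xf ih =>
    rintro ⟨hX, hf⟩
    have e : ∀ x, (Xf x).Path ≃ (fAux (Xf x)).PathA := fun x => Classical.choice (ih x (hf x))
    haveI : IsEmpty (PLift (IsEmpty X)) := ⟨fun p => p.down.false hX.some⟩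
    exact ⟨(Equiv.sigmaCongrRight e).trans (Equiv.emptySum (PLift (IsEmpty X)) _).symm⟩

end

/-- There are maps `f` from type trees with inhabited internal nodes to Aczel
trees (with decidable nodes) and `g` in the other direction, whose round trips
are levelwise equivalent to the identity, and `f` preserves paths up to
bijection. -/

theorem trees_vs_aczel_trees :
    ∃ (f : (t : GTree) → t.InhNodes → TreeA)
      (g : (a : TreeA) → a.DecNodes → GTree),
      (∀ t h, (f t h).DecNodes) ∧
      (∀ a h, (g a h).InhNodes) ∧
      (∀ (t : GTree) (h : t.InhNodes) (hd : (f t h).DecNodes),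
          (g (f t h) hd).Eqv t) ∧
      (∀ (a : TreeA) (h : a.DecNodes) (hi : (g a h).InhNodes),
          (f (g a h) hi).Eqv a) ∧
      (∀ (t : GTree) (h : t.InhNodes), Nonempty (t.Path ≃ (f t h).PathA)) := by
  exact ⟨fun t _ => fAux t, fun a _ => gAux a,
    fun t _ => fAux_dec t, fun a _ => gAux_inh a,
    fun t h _ => gf_eqv t h, fun a _ _ => fg_eqv a,
    fun t h => path_equiv t h⟩
end

section
/- If ε : J X attains φ : K X and, for every x : X, δ(x) : J (Y x) attains γ(x) : K (Y x), then the quantifier attained by the product selection function equals the product of the attained quantifiers: for all q : ((x : X) × Y x) → R, q((ε ⊗J δ)(q)) = (φ ⊗K γ)(q). -/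
/-- If `ε` attains `φ` and each `δ x` attains `γ x`, then the quantifier attained
by the product selection function equals the product of the attained quantifiers:
for all `q`, `q ((ε ⊗J δ) q) = (φ ⊗K γ) q`. -/
theorem bar_prodJ_eq_prodK {R X : Type} {Y : X → Type}
    (ε : J R X) (φ : K R X) (δ : (x : X) → J R (Y x)) (γ : (x : X) → K R (Y x))
    (hε : Attains ε φ) (hδ : ∀ x, Attains (δ x) (γ x)) :
    ∀ q : ((x : X) × Y x) → R, q (prodJ ε δ q) = prodK φ γ q := by
  intro q
  have h1 : (fun x => q ⟨x, δ x (fun y => q ⟨x, y⟩)⟩) = fun x => γ x (fun y => q ⟨x, y⟩) := by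
    funext x; exact hδ x (fun y => q ⟨x, y⟩)
  calc q (prodJ ε δ q)
      = (fun x => q ⟨x, δ x (fun y => q ⟨x, y⟩)⟩)
          (ε (fun x => q ⟨x, δ x (fun y => q ⟨x, y⟩)⟩)) := rfl
    _ = φ (fun x => q ⟨x, δ x (fun y => q ⟨x, y⟩)⟩) := hε (fun x => q ⟨x, δ x (fun y => q ⟨x, y⟩)⟩)
    _ = prodK φ γ q := by rw [h1]; rfl
end
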